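/- arXiv:math/0505505 — 4 statements merged into one kernel-verified Lean document; each statement's English description precedes it below -/
import Mathlib

section
/- Let U, V, W be open ℝ₊-connected subsets of X. Then the set U ∪ (V ∩ ℝ₊(U ∩ V)) ∪ (W ∩ ℝ₊(U ∩ W)) is ℝ₊-connected. (Lemma 1.17 of the paper.) -/
/-- The multiplicative group of positive real numbers. -/
abbrev Rpos : Type := {t : ℝ // 0 < t}

/-- The saturation `ℝ₊S = {t • x : t ∈ ℝ₊, x ∈ S}` of a set `S`. -/
def RposSat {X : Type*} [SMul Rpos X] (S : Set X) : Set X :=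
  {y | ∃ (t : Rpos) (x : X), x ∈ S ∧ t • x = y}

/-- A set `S` is `ℝ₊`-connected if its intersection with every orbit
`ℝ₊x = {t • x : t ∈ ℝ₊}` is connected or empty (i.e. preconnected). -/
def RposConnected {X : Type*} [TopologicalSpace X] [SMul Rpos X] (S : Set X) : Prop :=
  ∀ x : X, IsPreconnected (S ∩ Set.range (fun t : Rpos => t • x))

/-- Every orbit is contractible: for each `x`, either `x` is a fixed point of the action,
or the orbit map `t ↦ t • x` is a homeomorphism of `ℝ₊` onto the orbit `ℝ₊x` endowed with
its subspace topology (i.e. it is a topological embedding). -/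
def OrbitHyp (X : Type*) [TopologicalSpace X] [SMul Rpos X] : Prop :=
  ∀ x : X, (∀ t : Rpos, t • x = x) ∨ Topology.IsEmbedding (fun t : Rpos => t • x)

/-!
Fix an orbit `b`. The saturation `ℝ₊(U ∩ V)` contains `b` if `U ∩ V` meets `b` and misses `b`
otherwise, so the trace of `U ∪ (V ∩ ℝ₊(U ∩ V))` on `b` is either `U ∩ b` or the union of the
preconnected sets `U ∩ b` and `V ∩ b`, which then share a point of `U ∩ V`. Adjoining
`W ∩ ℝ₊(U ∩ W)` in the same way keeps the trace preconnected.
-/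

open MulAction

section RposSat

variable {X : Type*} [MulAction Rpos X]

theorem mem_RposSat_iff_of_mem_orbit {S : Set X} {x y : X} (hy : y ∈ orbit Rpos x) :
    y ∈ RposSat S ↔ (S ∩ orbit Rpos x).Nonempty := by
  rw [← orbit_eq_iff.mpr hy]
  constructor
  · rintro ⟨t, z, hz, rfl⟩
    exact ⟨z, hz, t⁻¹, inv_smul_smul t z⟩
  · rintro ⟨z, hz, t, rfl⟩
    exact ⟨t⁻¹, t • y, hz, inv_smul_smul t y⟩

theorem inter_RposSat_inter_orbit_of_nonempty {S V : Set X} {x : X}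
    (h : (S ∩ orbit Rpos x).Nonempty) :
    V ∩ RposSat S ∩ orbit Rpos x = V ∩ orbit Rpos x := by
  ext y
  by_cases hy : y ∈ orbit Rpos x
  · simp [hy, mem_RposSat_iff_of_mem_orbit hy, h]
  · simp [hy]

theorem inter_RposSat_inter_orbit_of_not_nonempty {S V : Set X} {x : X}
    (h : ¬(S ∩ orbit Rpos x).Nonempty) :
    V ∩ RposSat S ∩ orbit Rpos x = ∅ := by
  ext y
  by_cases hy : y ∈ orbit Rpos x
  · simp [hy, mem_RposSat_iff_of_mem_orbit hy, h]
  · simp [hy]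

variable [TopologicalSpace X]

theorem IsPreconnected.union_inter_RposSat_inter_orbit {S T V : Set X} {x : X} (hST : S ⊆ T)
    (hT : IsPreconnected (T ∩ orbit Rpos x)) (hV : IsPreconnected (V ∩ orbit Rpos x)) :
    IsPreconnected ((T ∪ V ∩ RposSat (S ∩ V)) ∩ orbit Rpos x) := by
  rw [Set.union_inter_distrib_right]
  by_cases h : (S ∩ V ∩ orbit Rpos x).Nonempty
  · rw [inter_RposSat_inter_orbit_of_nonempty h]
    obtain ⟨z, ⟨hzS, hzV⟩, hzx⟩ := h
    exact hT.union z ⟨hST hzS, hzx⟩ ⟨hzV, hzx⟩ hV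
  · rwa [inter_RposSat_inter_orbit_of_not_nonempty h, Set.union_empty]

end RposSat

theorem stmt_0_general {X : Type*} [TopologicalSpace X] [MulAction Rpos X]
    (U V W : Set X)
    (hUc : RposConnected U) (hVc : RposConnected V) (hWc : RposConnected W) :
    RposConnected (U ∪ (V ∩ RposSat (U ∩ V)) ∪ (W ∩ RposSat (U ∩ W))) := fun x =>
  ((hUc x).union_inter_RposSat_inter_orbit subset_rfl (hVc x)).union_inter_RposSat_inter_orbit
    Set.subset_union_left (hWc x)

/-- Lemma 1.17: if `U, V, W` are open `ℝ₊`-connected subsets of `X`, then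
`U ∪ (V ∩ ℝ₊(U ∩ V)) ∪ (W ∩ ℝ₊(U ∩ W))` is `ℝ₊`-connected. -/
theorem stmt_0 {X : Type*} [TopologicalSpace X] [MulAction Rpos X] [ContinuousSMul Rpos X]
    (horb : OrbitHyp X) (U V W : Set X)
    (hUo : IsOpen U) (hVo : IsOpen V) (hWo : IsOpen W)
    (hUc : RposConnected U) (hVc : RposConnected V) (hWc : RposConnected W) :
    RposConnected (U ∪ (V ∩ RposSat (U ∩ V)) ∪ (W ∩ RposSat (U ∩ W))) :=
  stmt_0_general U V W hUc hVc hWc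
end

section
/- Let U and V be open ℝ₊-connected subsets of X. Then U ∪ (V ∩ ℝ₊(U ∩ V)) is ℝ₊-connected. (Step (ii) in the proof of Lemma 1.17 of the paper.) -/
/-! Orbits of the group `ℝ₊` partition `X`, so the orbit `ℝ₊x` either meets `U ∩ V`, in which case it
lies in `ℝ₊(U ∩ V)` and the set in question cuts it in `(U ∩ ℝ₊x) ∪ (V ∩ ℝ₊x)`, a union of two
preconnected sets with a common point; or it does not, and then it misses `ℝ₊(U ∩ V)`
altogether, so the set cuts it in `U ∩ ℝ₊x`. -/

open MulAction

section Saturation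

variable {X : Type*} [MulAction Rpos X] {S : Set X} {x : X}

theorem orbit_subset_rposSat {z : X} (hzS : z ∈ S) (hzx : z ∈ orbit Rpos x) :
    orbit Rpos x ⊆ RposSat S := by
  rw [← orbit_eq_iff.2 hzx]
  rintro _ ⟨t, rfl⟩
  exact ⟨t, z, hzS, rfl⟩

theorem inter_orbit_nonempty_of_mem_rposSat {y : X} (hyS : y ∈ RposSat S)
    (hyx : y ∈ orbit Rpos x) : (S ∩ orbit Rpos x).Nonempty := by
  obtain ⟨t, z, hzS, rfl⟩ := hyS
  rw [← orbit_eq_iff.2 hyx, orbit_smul]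
  exact ⟨z, hzS, mem_orbit_self z⟩

theorem inter_rposSat_inter_orbit_of_nonempty (T : Set X) (h : (S ∩ orbit Rpos x).Nonempty) :
    T ∩ RposSat S ∩ orbit Rpos x = T ∩ orbit Rpos x := by
  obtain ⟨z, hzS, hzx⟩ := h
  rw [Set.inter_right_comm,
    Set.inter_eq_left.2 (Set.inter_subset_right.trans (orbit_subset_rposSat hzS hzx))]

theorem inter_rposSat_inter_orbit_of_not_nonempty (T : Set X)
    (h : ¬(S ∩ orbit Rpos x).Nonempty) : T ∩ RposSat S ∩ orbit Rpos x = ∅ :=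
  Set.eq_empty_of_forall_notMem fun _ ⟨⟨_, hyS⟩, hyx⟩ =>
    h (inter_orbit_nonempty_of_mem_rposSat hyS hyx)

end Saturation

theorem stmt_2_general {X : Type*} [TopologicalSpace X] [MulAction Rpos X]
    (U V : Set X)
    (hUc : RposConnected U) (hVc : RposConnected V) :
    RposConnected (U ∪ (V ∩ RposSat (U ∩ V))) := by
  intro x
  change IsPreconnected ((U ∪ (V ∩ RposSat (U ∩ V))) ∩ orbit Rpos x)
  rw [Set.union_inter_distrib_right]
  by_cases h : (U ∩ V ∩ orbit Rpos x).Nonempty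
  · rw [inter_rposSat_inter_orbit_of_nonempty V h]
    obtain ⟨z, ⟨hzU, hzV⟩, hzx⟩ := h
    exact (hUc x).union z ⟨hzU, hzx⟩ ⟨hzV, hzx⟩ (hVc x)
  · rw [inter_rposSat_inter_orbit_of_not_nonempty V h, Set.union_empty]
    exact hUc x

/-- Step (ii) in the proof of Lemma 1.17: if `U` and `V` are open `ℝ₊`-connected subsets
of `X`, then `U ∪ (V ∩ ℝ₊(U ∩ V))` is `ℝ₊`-connected. -/
theorem stmt_2 {X : Type*} [TopologicalSpace X] [MulAction Rpos X] [ContinuousSMul Rpos X]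
    (horb : OrbitHyp X) (U V : Set X)
    (hUo : IsOpen U) (hVo : IsOpen V)
    (hUc : RposConnected U) (hVc : RposConnected V) :
    RposConnected (U ∪ (V ∩ RposSat (U ∩ V))) :=
  stmt_2_general U V hUc hVc
end

section
/- Let U be an open ℝ₊-connected subset of X and let U₁, …, Uₙ be open ℝ₊-connected subsets of X with U ⊆ U₁ ∪ … ∪ Uₙ. Then there exist finitely many open ℝ₊-connected subsets V₁, …, V_m of X such that: each V_i is contained in some U_j; U ⊆ V₁ ∪ … ∪ V_m; and for every j ∈ {1, …, m} the ordered partial union V₁ ∪ … ∪ V_j is ℝ₊-connected. (Topological core of Lemma 1.16 of the paper: every finite covering of an ℝ₊-connected open set by ℝ₊-connected open sets admits a finite refinement whose ordered partial unions are ℝ₊-connected.) -/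
namespace Stmt4Aux

open Pointwise

set_option linter.unusedSectionVars false

/-! ### Generic list/set union helpers -/

def PU {X : Type*} (L : List (Set X)) : Set X := ⋃ s ∈ L, s

lemma mem_PU {X : Type*} {L : List (Set X)} {y : X} : y ∈ PU L ↔ ∃ s ∈ L, y ∈ s := by
  simp [PU]

lemma PU_nil {X : Type*} : PU ([] : List (Set X)) = ∅ := by simp [PU]

lemma PU_append {X : Type*} (L1 L2 : List (Set X)) : PU (L1 ++ L2) = PU L1 ∪ PU L2 := by
  ext y
  simp only [mem_PU, List.mem_append, Set.mem_union]
  constructor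
  · rintro ⟨s, h | h, hy⟩
    · exact Or.inl ⟨s, h, hy⟩
    · exact Or.inr ⟨s, h, hy⟩
  · rintro (⟨s, h, hy⟩ | ⟨s, h, hy⟩)
    · exact ⟨s, Or.inl h, hy⟩
    · exact ⟨s, Or.inr h, hy⟩

lemma PU_singleton {X : Type*} (S : Set X) : PU [S] = S := by
  ext y; simp [PU]

lemma PU_subset {X : Type*} {L : List (Set X)} {A : Set X} (h : ∀ s ∈ L, s ⊆ A) :
    PU L ⊆ A := by
  intro y hy
  obtain ⟨s, hs, hys⟩ := mem_PU.mp hy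
  exact h s hs hys

lemma take_flatten' {α : Type*} : ∀ (LL : List (List α)) (q : ℕ), ∃ k j,
    LL.flatten.take q = (LL.take k).flatten ++ ((LL.drop k).headD []).take j := by
  intro LL
  induction LL with
  | nil => intro q; exact ⟨0, 0, by simp⟩
  | cons b rest ih =>
    intro q
    by_cases h : q ≤ b.length
    · refine ⟨0, q, ?_⟩
      simp only [List.flatten_cons, List.take_append, List.take_zero,
        List.flatten_nil, List.drop_zero, List.headD_cons, List.nil_append]
      rw [Nat.sub_eq_zero_of_le h, List.take_zero, List.append_nil]
    · obtain ⟨k, j, hk⟩ := ih (q - b.length)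
      refine ⟨k + 1, j, ?_⟩
      simp only [List.flatten_cons, List.take_append,
        List.take_succ_cons, List.drop_succ_cons]
      rw [List.take_of_length_le (Nat.le_of_lt (Nat.lt_of_not_le h)), hk,
        List.append_assoc]

/-! ### Orbits and saturation -/

variable {X : Type*} [TopologicalSpace X] [MulAction Rpos X] [ContinuousSMul Rpos X]

def orb (x : X) : Set X := Set.range (fun t : Rpos => t • x)

lemma rposSat_eq_iUnion (S : Set X) : RposSat S = ⋃ t : Rpos, t • S := by
  ext y
  constructor
  · rintro ⟨t, z, hz, hzy⟩
    exact Set.mem_iUnion.mpr ⟨t, Set.mem_smul_set.mpr ⟨z, hz, hzy⟩⟩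
  · intro hy
    obtain ⟨t, hy⟩ := Set.mem_iUnion.mp hy
    obtain ⟨z, hz, hzy⟩ := Set.mem_smul_set.mp hy
    exact ⟨t, z, hz, hzy⟩

lemma isOpen_rposSat {S : Set X} (hS : IsOpen S) : IsOpen (RposSat S) := by
  rw [rposSat_eq_iUnion]
  exact isOpen_iUnion fun t => hS.smul t

lemma orb_subset_sat {S : Set X} {x : X} (h : (S ∩ orb x).Nonempty) :
    orb x ⊆ RposSat S := by
  obtain ⟨z, hzS, s, hs⟩ := h
  rintro y ⟨t, rfl⟩
  refine ⟨t * s⁻¹, z, hzS, ?_⟩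
  rw [← hs, smul_smul, inv_mul_cancel_right]

lemma sat_inter_orb_empty {S : Set X} {x : X} (h : S ∩ orb x = ∅) :
    RposSat S ∩ orb x = ∅ := by
  rw [Set.eq_empty_iff_forall_notMem]
  rintro y ⟨⟨s, z, hzS, hsz⟩, t, rfl⟩
  have hz : z ∈ S ∩ orb x := by
    refine ⟨hzS, s⁻¹ * t, ?_⟩
    have : z = s⁻¹ • (s • z) := by rw [smul_smul, inv_mul_cancel, one_smul]
    rw [this, hsz, smul_smul]
  rw [h] at hz
  exact hz

/-- Intersection of two `ℝ₊`-connected sets is `ℝ₊`-connected, using that orbits are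
points or embedded copies of `ℝ₊`. -/
lemma rposConnected_inter (horb : OrbitHyp X) {A B : Set X}
    (hA : RposConnected A) (hB : RposConnected B) : RposConnected (A ∩ B) := by
  intro x
  rcases horb x with hfix | hemb
  · have horbx : Set.range (fun t : Rpos => t • x) = {x} := by
      apply Set.eq_singleton_iff_unique_mem.mpr
      exact ⟨⟨1, hfix 1⟩, by rintro y ⟨t, rfl⟩; exact hfix t⟩
    rw [horbx]
    exact Set.Subsingleton.isPreconnected (Set.subsingleton_singleton.anti
      Set.inter_subset_right)
  · set e := fun t : Rpos => t • x with he
    have hind := hemb.toIsInducing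
    have hA' : IsPreconnected (e ⁻¹' A) := by
      rw [← hind.isPreconnected_image, Set.image_preimage_eq_inter_range]
      exact hA x
    have hB' : IsPreconnected (e ⁻¹' B) := by
      rw [← hind.isPreconnected_image, Set.image_preimage_eq_inter_range]
      exact hB x
    have hvA : IsPreconnected (Subtype.val '' (e ⁻¹' A)) :=
      hA'.image _ continuous_subtype_val.continuousOn
    have hvB : IsPreconnected (Subtype.val '' (e ⁻¹' B)) :=
      hB'.image _ continuous_subtype_val.continuousOn
    have h3 : IsPreconnected ((Subtype.val '' (e ⁻¹' A)) ∩ (Subtype.val '' (e ⁻¹' B))) :=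
      (hvA.ordConnected.inter hvB.ordConnected).isPreconnected
    rw [← Set.image_inter Subtype.val_injective] at h3
    have h4 : IsPreconnected (e ⁻¹' A ∩ e ⁻¹' B) :=
      (Topology.IsEmbedding.subtypeVal.toIsInducing.isPreconnected_image).mp h3
    have h5 : A ∩ B ∩ Set.range e = e '' (e ⁻¹' A ∩ e ⁻¹' B) := by
      rw [← Set.preimage_inter, Set.image_preimage_eq_inter_range]
    rw [h5]
    exact hind.isPreconnected_image.mpr h4

/-! ### The refinement sets -/

variable {n : ℕ}

def Rel (W : Fin n → Set X) (x : X) (a b : Fin n) : Prop :=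
  ((W a ∩ W b) ∩ orb x).Nonempty

def chainSat (W : Fin n → Set X) : List (Fin n) → Set X
  | [] => Set.univ
  | [_] => Set.univ
  | a :: b :: l => RposSat (W a ∩ W b) ∩ chainSat W (b :: l)

def gset (W : Fin n → Set X) (r : Fin n) (t : List (Fin n)) : Set X :=
  W (t.headD r) ∩ chainSat W (t ++ [r])

def allLists (n : ℕ) : ℕ → List (List (Fin n))
  | 0 => [[]]
  | k+1 => (allLists n k).flatMap fun t => (List.finRange n).map fun a => a :: t

def chunkL (W : Fin n → Set X) (r : Fin n) (k : ℕ) : List (Set X) :=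
  (allLists n k).map (gset W r)

def blockL (W : Fin n → Set X) (r : Fin n) : List (Set X) :=
  (List.range n).flatMap (chunkL W r)

def lsL (W : Fin n → Set X) : List (Set X) :=
  (List.finRange n).flatMap (blockL W)

lemma isOpen_chainSat {W : Fin n → Set X} (hW : ∀ i, IsOpen (W i)) :
    ∀ l, IsOpen (chainSat W l)
  | [] => by simp only [chainSat]; exact isOpen_univ
  | [_] => by simp only [chainSat]; exact isOpen_univ
  | a :: b :: l =>
    (isOpen_rposSat ((hW a).inter (hW b))).inter (isOpen_chainSat hW (b :: l))

lemma isOpen_gset {W : Fin n → Set X} (hW : ∀ i, IsOpen (W i)) (r : Fin n)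
    (t : List (Fin n)) : IsOpen (gset W r t) :=
  (hW _).inter (isOpen_chainSat hW _)

lemma orb_subset_chainSat {W : Fin n → Set X} {x : X} :
    ∀ l, List.Chain' (Rel W x) l → orb x ⊆ chainSat W l
  | [], _ => by simp only [chainSat]; exact Set.subset_univ _
  | [_], _ => by simp only [chainSat]; exact Set.subset_univ _
  | a :: b :: l, h => by
    rw [List.Chain', List.isChain_cons_cons] at h
    simp only [chainSat]
    exact Set.subset_inter (orb_subset_sat h.1) (orb_subset_chainSat (b :: l) h.2)

lemma chainSat_inter_orb_empty {W : Fin n → Set X} {x : X} :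
    ∀ l, ¬ List.Chain' (Rel W x) l → chainSat W l ∩ orb x = ∅
  | [], h => absurd List.isChain_nil h
  | [a], h => absurd (List.isChain_singleton a) h
  | a :: b :: l, h => by
    rw [List.Chain', List.isChain_cons_cons] at h
    simp only [chainSat]
    by_cases hab : Rel W x a b
    · have h2 : ¬ List.Chain' (Rel W x) (b :: l) := fun hc => h ⟨hab, hc⟩
      have := chainSat_inter_orb_empty (b :: l) h2
      rw [Set.eq_empty_iff_forall_notMem] at this ⊢
      rintro y ⟨⟨_, hy2⟩, hy3⟩
      exact this y ⟨hy2, hy3⟩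
    · have hemp : (W a ∩ W b) ∩ orb x = ∅ :=
        Set.not_nonempty_iff_eq_empty.mp hab
      have := sat_inter_orb_empty hemp
      rw [Set.eq_empty_iff_forall_notMem] at this ⊢
      rintro y ⟨⟨hy1, _⟩, hy3⟩
      exact this y ⟨hy1, hy3⟩

lemma head?_append_single (t : List (Fin n)) (r : Fin n) :
    (t ++ [r]).head? = some (t.headD r) := by
  cases t <;> simp

lemma gset_inter_orb_of_chain {W : Fin n → Set X} {x : X} {r : Fin n} {t : List (Fin n)}
    (h : List.Chain' (Rel W x) (t ++ [r])) :
    gset W r t ∩ orb x = W (t.headD r) ∩ orb x := by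
  rw [gset, Set.inter_assoc,
    Set.inter_eq_self_of_subset_right (orb_subset_chainSat _ h)]

lemma gset_inter_orb_of_not {W : Fin n → Set X} {x : X} {r : Fin n} {t : List (Fin n)}
    (h : ¬ List.Chain' (Rel W x) (t ++ [r])) :
    gset W r t ∩ orb x = ∅ := by
  have := chainSat_inter_orb_empty (W := W) (x := x) (t ++ [r]) h
  rw [Set.eq_empty_iff_forall_notMem] at this ⊢
  rintro y ⟨⟨_, hy2⟩, hy3⟩
  exact this y ⟨hy2, hy3⟩

lemma chain_cons_decomp {W : Fin n → Set X} {x : X} {r a : Fin n} {t' : List (Fin n)}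
    (h : List.Chain' (Rel W x) ((a :: t') ++ [r])) :
    Rel W x a (t'.headD r) ∧ List.Chain' (Rel W x) (t' ++ [r]) := by
  rw [List.cons_append, List.Chain', List.isChain_cons] at h
  refine ⟨h.1 _ ?_, h.2⟩
  rw [head?_append_single]
  rfl

lemma chain_gives_root {W : Fin n → Set X} {x : X} {r : Fin n} {t : List (Fin n)}
    (h : List.Chain' (Rel W x) (t ++ [r])) (ht : t ≠ []) :
    (W r ∩ orb x).Nonempty := by
  rw [List.Chain', List.isChain_append] at h
  obtain ⟨-, -, h3⟩ := h
  have hrel : Rel W x (t.getLast ht) r := by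
    apply h3
    · rw [List.getLast?_eq_getLast ht]; rfl
    · rfl
  obtain ⟨z, hz⟩ := hrel
  exact ⟨z, hz.1.2, hz.2⟩

lemma mem_allLists_self : ∀ t : List (Fin n), t ∈ allLists n t.length
  | [] => by simp only [List.length_nil, allLists]; exact List.mem_singleton.mpr rfl
  | a :: t => by
    show (a :: t) ∈ allLists n (t.length + 1)
    simp only [allLists]
    exact List.mem_flatMap.mpr ⟨t, mem_allLists_self t,
      List.mem_map.mpr ⟨a, List.mem_finRange a, rfl⟩⟩

lemma allLists_succ_shape {t : List (Fin n)} {k : ℕ} (h : t ∈ allLists n (k+1)) :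
    ∃ a t', t = a :: t' ∧ t' ∈ allLists n k := by
  simp only [allLists] at h
  obtain ⟨t', ht', h2⟩ := List.mem_flatMap.mp h
  obtain ⟨a, -, rfl⟩ := List.mem_map.mp h2
  exact ⟨a, t', rfl, ht'⟩

lemma mem_blockL {W : Fin n → Set X} {r : Fin n} {S : Set X} (h : S ∈ blockL W r) :
    ∃ t, S = gset W r t := by
  obtain ⟨k, -, h2⟩ := List.mem_flatMap.mp h
  obtain ⟨t, -, rfl⟩ := List.mem_map.mp h2
  exact ⟨t, rfl⟩

lemma mem_lsL {W : Fin n → Set X} {S : Set X} (h : S ∈ lsL W) :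
    ∃ r t, S = gset W r t := by
  obtain ⟨r, -, h2⟩ := List.mem_flatMap.mp h
  obtain ⟨t, ht⟩ := mem_blockL h2
  exact ⟨r, t, ht⟩

lemma gset_subset {W : Fin n → Set X} (r : Fin n) (t : List (Fin n)) :
    gset W r t ⊆ W (t.headD r) := Set.inter_subset_left

/-! ### Per-orbit reachability -/

section PerOrbit

variable {W : Fin n → Set X} {U : Set X} {x : X}

/-- If `W r` meets the orbit of `x`, then the block of `r` covers all of `U` on that
orbit. -/
lemma block_cover (hWo : ∀ i, IsOpen (W i)) (hWU : ∀ i, W i ⊆ U)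
    (hWcov : ∀ y ∈ U, ∃ i, y ∈ W i) (hJU : IsPreconnected (U ∩ orb x))
    {r : Fin n} (hr : (W r ∩ orb x).Nonempty) :
    U ∩ orb x ⊆ PU (blockL W r) := by
  classical
  set R : Set (Fin n) := {s | ∃ l : List (Fin n), List.Chain' (Rel W x) l ∧
    l.getLast? = some r ∧ l.Nodup ∧ l.head? = some s} with hR
  have mem_R : ∀ l : List (Fin n), List.Chain' (Rel W x) l → l.getLast? = some r →
      l.Nodup → ∀ a ∈ l, a ∈ R := by
    intro l
    induction l with
    | nil => intro _ _ _ a ha; exact absurd ha List.not_mem_nil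
    | cons b l' ih =>
      intro hc hl hn a ha
      rcases List.mem_cons.mp ha with heq | ha'
      · exact ⟨b :: l', hc, hl, hn, by rw [List.head?_cons, heq]⟩
      · have hne : l' ≠ [] := List.ne_nil_of_mem ha'
        obtain ⟨c, l'', rfl⟩ := List.exists_cons_of_ne_nil hne
        exact ih hc.tail (by rwa [List.getLast?_cons_cons] at hl) hn.of_cons a ha'
  have hext : ∀ a b : Fin n, a ∈ R → Rel W x b a → b ∈ R := by
    rintro a b ⟨l, hc, hl, hn, hh⟩ hrel
    by_cases hbl : b ∈ l
    · exact mem_R l hc hl hn b hbl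
    · have hlne : l ≠ [] := by
        intro hnil; rw [hnil] at hh; cases hh
      obtain ⟨c, l', rfl⟩ := List.exists_cons_of_ne_nil hlne
      have hca : c = a := by
        rw [List.head?_cons] at hh; exact Option.some_inj.mp hh
      refine ⟨b :: c :: l', ?_, ?_, ?_, rfl⟩
      · rw [List.Chain', List.isChain_cons_cons]
        exact ⟨hca ▸ hrel, hc⟩
      · rwa [List.getLast?_cons_cons]
      · exact List.nodup_cons.mpr ⟨hbl, hn⟩
  have hrR : r ∈ R := ⟨[r], List.isChain_singleton r, rfl, List.nodup_singleton r, rfl⟩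
  have hsupp : ∀ s : Fin n, (W s ∩ orb x).Nonempty → s ∈ R := by
    intro s hs
    by_contra hsR
    obtain ⟨z, hz⟩ := hJU (⋃ a ∈ R, W a) (⋃ a ∈ {a | a ∉ R}, W a)
      (isOpen_biUnion fun a _ => hWo a) (isOpen_biUnion fun a _ => hWo a)
      (by
        rintro y ⟨hyU, hyO⟩
        obtain ⟨i, hyW⟩ := hWcov y hyU
        by_cases hiR : i ∈ R
        · exact Or.inl (Set.mem_biUnion hiR hyW)
        · exact Or.inr (Set.mem_biUnion hiR hyW))
      (by
        obtain ⟨z, hz1, hz2⟩ := hr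
        exact ⟨z, ⟨hWU r hz1, hz2⟩, Set.mem_biUnion hrR hz1⟩)
      (by
        obtain ⟨z, hz1, hz2⟩ := hs
        exact ⟨z, ⟨hWU s hz1, hz2⟩, Set.mem_biUnion hsR hz1⟩)
    obtain ⟨⟨hzU, hzO⟩, hzu, hzv⟩ := hz
    obtain ⟨a, haR, hza⟩ := Set.mem_iUnion₂.mp hzu
    obtain ⟨b, hbR, hzb⟩ := Set.mem_iUnion₂.mp hzv
    exact hbR (hext a b haR ⟨z, ⟨hzb, hza⟩, hzO⟩)
  rintro y ⟨hyU, hyO⟩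
  obtain ⟨i, hyW⟩ := hWcov y hyU
  obtain ⟨l, hc, hl, hn, hh⟩ := hsupp i ⟨y, hyW, hyO⟩
  have hlne : l ≠ [] := by
    intro hnil; rw [hnil] at hh; cases hh
  have hlast : l.getLast hlne = r := by
    rw [List.getLast?_eq_getLast hlne] at hl
    exact Option.some_inj.mp hl
  have hlt : l = l.dropLast ++ [r] := by
    conv_lhs => rw [← List.dropLast_append_getLast hlne]
    rw [hlast]
  set t := l.dropLast with htdef
  have hchain : List.Chain' (Rel W x) (t ++ [r]) := by rw [← hlt]; exact hc
  have hhead : t.headD r = i := by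
    have h1 : l.head? = some (t.headD r) := by
      rw [hlt]; exact head?_append_single t r
    rw [hh] at h1
    exact (Option.some_inj.mp h1).symm
  have hlen : t.length < n := by
    have h1 : l.length ≤ n := by
      have := hn.length_le_card
      rwa [Fintype.card_fin] at this
    have h2 : l.length = t.length + 1 := by
      rw [hlt, List.length_append, List.length_singleton]
    omega
  have hymem : y ∈ gset W r t := by
    refine ⟨?_, orb_subset_chainSat _ hchain hyO⟩
    rw [hhead]; exact hyW
  refine mem_PU.mpr ⟨gset W r t, ?_, hymem⟩
  exact List.mem_flatMap.mpr ⟨t.length, List.mem_range.mpr hlen,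
    List.mem_map.mpr ⟨t, mem_allLists_self t, rfl⟩⟩

/-- If `W r` misses the orbit of `x`, then every set in the block of `r` misses it too. -/
lemma block_empty {r : Fin n} (hr : W r ∩ orb x = ∅) {S : Set X}
    (hS : S ∈ blockL W r) : S ∩ orb x = ∅ := by
  obtain ⟨t, rfl⟩ := mem_blockL hS
  by_cases hact : List.Chain' (Rel W x) (t ++ [r])
  · cases t with
    | nil =>
      rw [gset_inter_orb_of_chain hact]
      exact hr
    | cons a t' =>
      have := chain_gives_root hact (List.cons_ne_nil a t')
      rw [hr] at this
      exact absurd this Set.not_nonempty_empty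
  · exact gset_inter_orb_of_not hact

/-- Preconnectivity of partial unions within a block (entered with empty trace on the
orbit). -/
lemma chunk_precon (hWpre : ∀ i, RposConnected (W i)) (r : Fin n) (x : X) :
    ∀ k j, IsPreconnected ((PU ((List.range k).flatMap (chunkL W r)) ∪
      PU ((chunkL W r k).take j)) ∩ orb x) := by
  intro k
  induction k with
  | zero =>
    intro j
    rw [List.range_zero, List.flatMap_nil, PU_nil, Set.empty_union]
    have hchunk0 : chunkL W r 0 = [gset W r []] := by
      simp only [chunkL, allLists]; rfl
    cases j with
    | zero =>
      rw [List.take_zero, PU_nil, Set.empty_inter]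
      exact isPreconnected_empty
    | succ j =>
      rw [hchunk0]
      have htake : (([gset W r []] : List (Set X)).take (j+1)) = [gset W r []] :=
        List.take_of_length_le (by simp)
      rw [htake, PU_singleton]
      have hchain : List.Chain' (Rel W x) (([] : List (Fin n)) ++ [r]) :=
        List.isChain_singleton r
      rw [gset_inter_orb_of_chain hchain]
      exact hWpre _ x
  | succ k ihk =>
    have hFeq : PU ((List.range (k+1)).flatMap (chunkL W r)) =
        PU ((List.range k).flatMap (chunkL W r)) ∪ PU (chunkL W r k) := by
      rw [List.range_succ, List.flatMap_append, PU_append, List.flatMap_singleton]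
    have hF : IsPreconnected (PU ((List.range (k+1)).flatMap (chunkL W r)) ∩ orb x) := by
      have := ihk (chunkL W r k).length
      rw [List.take_length] at this
      rw [hFeq]
      exact this
    intro j
    induction j with
    | zero =>
      rw [List.take_zero, PU_nil, Set.union_empty]
      exact hF
    | succ j ihj =>
      by_cases hj : j < (chunkL W r (k+1)).length
      · rw [List.take_succ, List.getElem?_eq_getElem hj]
        have htl : (some ((chunkL W r (k+1))[j])).toList = [(chunkL W r (k+1))[j]] := rfl
        rw [htl, PU_append, PU_singleton]
        set S := (chunkL W r (k+1))[j] with hSdef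
        have hmemS : S ∈ chunkL W r (k+1) := List.getElem_mem hj
        obtain ⟨t, htmem, hSt⟩ := List.mem_map.mp hmemS
        obtain ⟨a, t', rfl, ht'⟩ := allLists_succ_shape htmem
        rw [← Set.union_assoc, Set.union_inter_distrib_right]
        by_cases hact : List.Chain' (Rel W x) ((a :: t') ++ [r])
        · have hSorb : S ∩ orb x = W a ∩ orb x := by
            rw [← hSt, gset_inter_orb_of_chain hact]
            rfl
          obtain ⟨hrel, hchain'⟩ := chain_cons_decomp hact
          obtain ⟨z, hz⟩ := hrel
          have hzF : z ∈ PU ((List.range (k+1)).flatMap (chunkL W r)) := by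
            refine mem_PU.mpr ⟨gset W r t', ?_, ?_, ?_⟩
            · exact List.mem_flatMap.mpr ⟨k, List.mem_range.mpr (Nat.lt_succ_self k),
                List.mem_map.mpr ⟨t', ht', rfl⟩⟩
            · exact hz.1.2
            · exact orb_subset_chainSat _ hchain' hz.2
          refine IsPreconnected.union z ⟨Or.inl hzF, hz.2⟩ ?_ ihj ?_
          · rw [hSorb]; exact ⟨hz.1.1, hz.2⟩
          · rw [hSorb]; exact hWpre a x
        · have hSorb : S ∩ orb x = ∅ := by
            rw [← hSt]; exact gset_inter_orb_of_not hact
          rw [hSorb, Set.union_empty]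
          exact ihj
      · have h1 : (chunkL W r (k+1)).take (j+1) = (chunkL W r (k+1)).take j := by
          rw [List.take_of_length_le (Nat.le_of_not_lt hj),
            List.take_of_length_le (Nat.le_succ_of_le (Nat.le_of_not_lt hj))]
        rw [h1]
        exact ihj

lemma block_precon (hWpre : ∀ i, RposConnected (W i)) (hWU : ∀ i, W i ⊆ U)
    (hJUpre : IsPreconnected (U ∩ orb x)) {P : Set X}
    (hinv : P ∩ orb x = ∅ ∨ P ∩ orb x = U ∩ orb x) (r : Fin n) :
    ∀ q, IsPreconnected ((P ∪ PU ((blockL W r).take q)) ∩ orb x) := by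
  intro q
  have hblocksub : PU ((blockL W r).take q) ⊆ U := by
    apply PU_subset
    intro s hs
    obtain ⟨t, rfl⟩ := mem_blockL (List.take_subset _ _ hs)
    exact (gset_subset r t).trans (hWU _)
  rcases hinv with hinv | hinv
  · rw [Set.union_inter_distrib_right, hinv, Set.empty_union]
    have hflat : blockL W r = ((List.range n).map (chunkL W r)).flatten := by
      rw [blockL, List.flatMap_def]
    obtain ⟨k, j, hdec⟩ := take_flatten' ((List.range n).map (chunkL W r)) q
    have hfull : ((((List.range n).map (chunkL W r))).take k).flatten
        = (List.range (min k n)).flatMap (chunkL W r) := by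
      rw [← List.map_take, List.take_range, List.flatMap_def]
    rw [hflat, hdec, PU_append, hfull, ← List.map_drop]
    cases hdr : (List.range n).drop k with
    | nil =>
      have h0 : ((([] : List ℕ).map (chunkL W r)).headD []).take j = [] := by simp
      rw [h0, PU_nil, Set.union_empty]
      have := chunk_precon hWpre r x (min k n) 0
      rwa [List.take_zero, PU_nil, Set.union_empty] at this
    | cons c tl =>
      have hkn : k < n := by
        by_contra hk
        have : (List.range n).drop k = [] :=
          List.drop_eq_nil_iff.mpr (by rw [List.length_range]; omega)
        rw [hdr] at this
        cases this
      have hc : c = k := by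
        have h1 : ((List.range n).drop k).head? = (List.range n)[k]? := List.head?_drop
        rw [hdr, List.head?_cons, List.getElem?_range hkn] at h1
        exact Option.some_inj.mp h1
      have hmin : min k n = k := min_eq_left (le_of_lt hkn)
      have hhd : (((c :: tl).map (chunkL W r)).headD []) = chunkL W r k := by
        rw [List.map_cons, List.headD_cons, hc]
      rw [hhd, hmin]
      exact chunk_precon hWpre r x k j
  · rw [Set.union_inter_distrib_right, hinv]
    have hsub : PU ((blockL W r).take q) ∩ orb x ⊆ U ∩ orb x :=
      Set.inter_subset_inter_left _ hblocksub
    rw [Set.union_eq_left.mpr hsub]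
    exact hJUpre

lemma pu_blocks_inv {W : Fin n → Set X} {U : Set X} {x : X}
    (hWo : ∀ i, IsOpen (W i)) (hWU : ∀ i, W i ⊆ U)
    (hWcov : ∀ y ∈ U, ∃ i, y ∈ W i) (hJU : IsPreconnected (U ∩ orb x)) :
    ∀ rs : List (Fin n), PU (rs.flatMap (blockL W)) ∩ orb x = ∅ ∨
      PU (rs.flatMap (blockL W)) ∩ orb x = U ∩ orb x := by
  intro rs
  induction rs with
  | nil => left; rw [List.flatMap_nil, PU_nil, Set.empty_inter]
  | cons r rs ih =>
    rw [List.flatMap_cons, PU_append, Set.union_inter_distrib_right]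
    have hsubU : PU (blockL W r) ∩ orb x ⊆ U ∩ orb x := by
      apply Set.inter_subset_inter_left
      apply PU_subset
      intro s hs
      obtain ⟨t, rfl⟩ := mem_blockL hs
      exact (gset_subset r t).trans (hWU _)
    by_cases hr : (W r ∩ orb x).Nonempty
    · right
      have h1 : PU (blockL W r) ∩ orb x = U ∩ orb x :=
        subset_antisymm hsubU (Set.subset_inter (block_cover hWo hWU hWcov hJU hr)
          Set.inter_subset_right)
      rcases ih with h2 | h2
      · rw [h1, h2, Set.union_empty]
      · rw [h1, h2, Set.union_self]
    · have h0 : PU (blockL W r) ∩ orb x = ∅ := by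
        rw [Set.eq_empty_iff_forall_notMem]
        rintro y ⟨hy1, hy2⟩
        obtain ⟨s, hs, hys⟩ := mem_PU.mp hy1
        have := block_empty (Set.not_nonempty_iff_eq_empty.mp hr) hs
        rw [Set.eq_empty_iff_forall_notMem] at this
        exact this y ⟨hys, hy2⟩
      rw [h0, Set.empty_union]
      exact ih

lemma ls_precon {W : Fin n → Set X} {U : Set X} {x : X}
    (hWo : ∀ i, IsOpen (W i)) (hWpre : ∀ i, RposConnected (W i))
    (hWU : ∀ i, W i ⊆ U) (hWcov : ∀ y ∈ U, ∃ i, y ∈ W i)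
    (hJU : IsPreconnected (U ∩ orb x)) :
    ∀ q, IsPreconnected (PU ((lsL W).take q) ∩ orb x) := by
  intro q
  have hflat : lsL W = ((List.finRange n).map (blockL W)).flatten := by
    rw [lsL, List.flatMap_def]
  obtain ⟨k, j, hdec⟩ := take_flatten' ((List.finRange n).map (blockL W)) q
  have hfull : (((List.finRange n).map (blockL W)).take k).flatten
      = ((List.finRange n).take k).flatMap (blockL W) := by
    rw [← List.map_take, List.flatMap_def]
  rw [hflat, hdec, PU_append, hfull, ← List.map_drop]
  have hinv := pu_blocks_inv hWo hWU hWcov hJU ((List.finRange n).take k)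
  have hP : IsPreconnected
      (PU (((List.finRange n).take k).flatMap (blockL W)) ∩ orb x) := by
    rcases hinv with h | h
    · rw [h]; exact isPreconnected_empty
    · rw [h]; exact hJU
  cases hdr : (List.finRange n).drop k with
  | nil =>
    have h0 : ((([] : List (Fin n)).map (blockL W)).headD []).take j = [] := by simp
    rw [h0, PU_nil, Set.union_empty]
    exact hP
  | cons r tl =>
    have hhd : (((r :: tl).map (blockL W)).headD []) = blockL W r := by
      rw [List.map_cons, List.headD_cons]
    rw [hhd]
    exact block_precon hWpre hWU hJU hinv r j

end PerOrbit

end Stmt4Aux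

open Stmt4Aux in
/-- Topological core of Lemma 1.16: every finite covering of an open `ℝ₊`-connected set `U`
by open `ℝ₊`-connected sets `U₁, …, Uₙ` admits a finite refinement `V₁, …, V_m` by open
`ℝ₊`-connected sets covering `U` whose ordered partial unions `V₁ ∪ … ∪ V_j` are all
`ℝ₊`-connected. -/
theorem stmt_4 {X : Type*} [TopologicalSpace X] [MulAction Rpos X] [ContinuousSMul Rpos X]
    (horb : OrbitHyp X) (U : Set X) (hUo : IsOpen U) (hUc : RposConnected U)
    (n : ℕ) (Us : Fin n → Set X) (hUso : ∀ i, IsOpen (Us i))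
    (hUsc : ∀ i, RposConnected (Us i)) (hcov : U ⊆ ⋃ i, Us i) :
    ∃ (m : ℕ) (V : Fin m → Set X),
      (∀ j, IsOpen (V j)) ∧ (∀ j, RposConnected (V j)) ∧
      (∀ j, ∃ i, V j ⊆ Us i) ∧ (U ⊆ ⋃ j, V j) ∧
      (∀ j : Fin m, RposConnected (⋃ i ∈ Set.Iic j, V i)) := by
  classical
  set W : Fin n → Set X := fun i => U ∩ Us i with hWdef
  have hWo : ∀ i, IsOpen (W i) := fun i => hUo.inter (hUso i)
  have hWpre : ∀ i, RposConnected (W i) := fun i => rposConnected_inter horb hUc (hUsc i)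
  have hWU : ∀ i, W i ⊆ U := fun i => Set.inter_subset_left
  have hWcov : ∀ y ∈ U, ∃ i, y ∈ W i := by
    intro y hy
    obtain ⟨i, hyUs⟩ := Set.mem_iUnion.mp (hcov hy)
    exact ⟨i, hy, hyUs⟩
  refine ⟨(lsL W).length, fun j => (lsL W).get j, ?_, ?_, ?_, ?_, ?_⟩
  · intro j
    obtain ⟨r, t, hrt⟩ := mem_lsL
      (show (lsL W).get j ∈ lsL W from List.get_mem (lsL W) j)
    show IsOpen ((lsL W).get j)
    rw [hrt]
    exact isOpen_gset hWo r t
  · intro j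
    obtain ⟨r, t, hrt⟩ := mem_lsL
      (show (lsL W).get j ∈ lsL W from List.get_mem (lsL W) j)
    show RposConnected ((lsL W).get j)
    rw [hrt]
    intro x
    show IsPreconnected (gset W r t ∩ orb x)
    by_cases hact : List.Chain' (Rel W x) (t ++ [r])
    · rw [gset_inter_orb_of_chain hact]
      exact hWpre _ x
    · rw [gset_inter_orb_of_not hact]
      exact isPreconnected_empty
  · intro j
    obtain ⟨r, t, hrt⟩ := mem_lsL
      (show (lsL W).get j ∈ lsL W from List.get_mem (lsL W) j)
    refine ⟨t.headD r, ?_⟩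
    show (lsL W).get j ⊆ Us (t.headD r)
    rw [hrt]
    exact (gset_subset r t).trans Set.inter_subset_right
  · intro y hy
    obtain ⟨i, hyW⟩ := hWcov y hy
    have hmem : gset W i [] ∈ lsL W := by
      refine List.mem_flatMap.mpr ⟨i, List.mem_finRange i, ?_⟩
      refine List.mem_flatMap.mpr ⟨0, List.mem_range.mpr i.pos, ?_⟩
      exact List.mem_map.mpr ⟨[], by simp only [allLists]; exact List.mem_singleton.mpr rfl,
        rfl⟩
    obtain ⟨jdx, hjdx⟩ := List.mem_iff_get.mp hmem
    refine Set.mem_iUnion.mpr ⟨jdx, ?_⟩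
    show y ∈ (lsL W).get jdx
    rw [hjdx]
    refine ⟨hyW, ?_⟩
    show y ∈ chainSat W ([] ++ [i])
    simp only [List.nil_append, chainSat]
    exact Set.mem_univ y
  · intro j
    show RposConnected (⋃ i ∈ Set.Iic j, (lsL W).get i)
    have hEq : (⋃ i ∈ Set.Iic j, (lsL W).get i) = PU ((lsL W).take (j.1 + 1)) := by
      ext y
      simp only [Set.mem_iUnion, mem_PU, Set.mem_Iic]
      constructor
      · rintro ⟨i, hij, hyi⟩
        refine ⟨(lsL W).get i, List.mem_take_iff_getElem.mpr ⟨i.1, ?_, ?_⟩, hyi⟩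
        · exact lt_min (Nat.lt_succ_of_le hij) i.2
        · rw [← List.get_eq_getElem]
      · rintro ⟨s, hs, hys⟩
        obtain ⟨i, hi, rfl⟩ := List.mem_take_iff_getElem.mp hs
        have hi2 : i < (lsL W).length := lt_of_lt_of_le hi (min_le_right _ _)
        refine ⟨⟨i, hi2⟩, ?_, ?_⟩
        · exact Fin.le_def.mpr (Nat.lt_succ_iff.mp (lt_of_lt_of_le hi (min_le_left _ _)))
        · rw [List.get_eq_getElem]
          exact hys
    rw [hEq]
    intro x
    show IsPreconnected (PU ((lsL W).take (j.1 + 1)) ∩ orb x)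
    exact ls_precon hWo hWpre hWU hWcov (hUc x) (j.1 + 1)
end

section
/- Let V ⊆ Z and let K ⊆ E be a compact ℝ₊-connected subset of the total space which is a neighborhood of the zero vector 0_z for every z ∈ V. Then: (1) τ⁻¹(V) \ K is ℝ₊-connected; and (2) ℝ₊(τ⁻¹(V) \ K) = τ⁻¹(V) \ Z₀, where Z₀ denotes the image of the zero section. (The geometric claim in the proof of Lemma 1.21(ii) of the paper.) -/
open Bundle Filter Set

variable {Z F : Type*} [TopologicalSpace Z]
  [NormedAddCommGroup F] [NormedSpace ℝ F] [FiniteDimensional ℝ F]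
  (E : Z → Type*) [∀ z, AddCommGroup (E z)] [∀ z, Module ℝ (E z)]
  [∀ z, TopologicalSpace (E z)] [TopologicalSpace (TotalSpace F E)]
  [FiberBundle F E] [VectorBundle ℝ F E]

/-- The orbit `ℝ₊e = {⟨τ(e), t • e⟩ : t > 0}` of a point of the total space under the
fiberwise action of the positive reals. -/
def rposOrbit (e : TotalSpace F E) : Set (TotalSpace F E) :=
  {e' | ∃ t : ℝ, 0 < t ∧ e' = ⟨e.proj, t • e.snd⟩}

/-- The saturation `ℝ₊S` of a subset of the total space under the fiberwise action of the
positive reals. -/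
def rposSat (S : Set (TotalSpace F E)) : Set (TotalSpace F E) :=
  {e' | ∃ t : ℝ, 0 < t ∧ ∃ e ∈ S, e' = ⟨e.proj, t • e.snd⟩}

/-- A subset of the total space is `ℝ₊`-connected if its intersection with every orbit of
the fiberwise action of the positive reals is connected or empty (i.e. preconnected). -/
def rposConnected (S : Set (TotalSpace F E)) : Prop :=
  ∀ e : TotalSpace F E, IsPreconnected (S ∩ rposOrbit E e)

/-- The image `Z₀` of the zero section in the total space. -/
def zeroSection : Set (TotalSpace F E) :=
  {e | e.snd = 0}

set_option linter.unusedSectionVars false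

lemma ray_isInducing (z : Z) {v : E z} (hv : v ≠ 0) :
    Topology.IsInducing (fun t : ℝ => (⟨z, t • v⟩ : TotalSpace F E)) := by
  have hz := FiberBundle.mem_baseSet_trivializationAt F E z
  set φ := (trivializationAt F E z).continuousLinearEquivAt ℝ z hz
  have hw : φ v ≠ 0 := by simp [hv]
  have : (fun t : ℝ => (⟨z, t • v⟩ : TotalSpace F E)) =
      (TotalSpace.mk z) ∘ (φ.symm : F → E z) ∘ (fun t : ℝ => t • φ v) := by
    ext t <;> simp
  rw [this]
  exact (FiberBundle.totalSpaceMk_isInducing F E z).comp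
    (φ.symm.toHomeomorph.isInducing.comp (isClosedEmbedding_smul_left hw).isInducing)

lemma exists_ray_not_mem {K : Set (TotalSpace F E)} (hK : IsCompact K)
    (z : Z) {v : E z} (hv : v ≠ 0) :
    ∃ s : ℝ, 0 < s ∧ (⟨z, s • v⟩ : TotalSpace F E) ∉ K := by
  by_contra h
  push_neg at h
  set g : ℝ → TotalSpace F E := fun t => ⟨z, t • v⟩ with hg
  have hle : Filter.map g Filter.atTop ≤ Filter.principal K := by
    rw [Filter.le_principal_iff, Filter.mem_map]
    filter_upwards [Filter.eventually_gt_atTop 0] with t ht using h t ht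
  obtain ⟨x, hxK, hx⟩ := hK hle
  set e' := trivializationAt F E x.proj with he'
  have hxsrc : x ∈ e'.source := e'.mem_source.2 (FiberBundle.mem_baseSet_trivializationAt F E x.proj)
  rw [clusterPt_iff_nonempty] at hx
  -- z ∈ e'.baseSet
  have hzb : z ∈ e'.baseSet := by
    obtain ⟨y, hy1, hy2⟩ := hx (e'.open_source.mem_nhds hxsrc)
      (Filter.image_mem_map (Filter.univ_mem (f := Filter.atTop)))
    obtain ⟨t, -, rfl⟩ := hy2
    exact e'.mem_source.1 hy1
  set φ := e'.continuousLinearEquivAt ℝ z hzb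
  have hw : 0 < ‖φ v‖ := by simp [norm_pos_iff, hv]
  set c := ‖(e' x).2‖ + 1 with hc
  have hUopen : IsOpen (e'.source ∩ (fun y => ‖(e' y).2‖) ⁻¹' Set.Iio c) := by
    apply ContinuousOn.isOpen_inter_preimage _ e'.open_source isOpen_Iio
    exact (continuous_norm.comp continuous_snd).comp_continuousOn e'.continuousOn
  have hxU : x ∈ e'.source ∩ (fun y => ‖(e' y).2‖) ⁻¹' Set.Iio c :=
    ⟨hxsrc, by simp [hc]⟩
  obtain ⟨y, hyU, hy2⟩ := hx (hUopen.mem_nhds hxU)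
    (Filter.image_mem_map (Filter.Ici_mem_atTop (c / ‖φ v‖ + 1)))
  obtain ⟨t, ht, rfl⟩ := hy2
  have ht0 : 0 < t := lt_of_lt_of_le (by positivity) ht
  have hval : (e' (g t)).2 = t • φ v := by
    have : φ (t • v) = (e' ⟨z, t • v⟩).2 := rfl
    rw [map_smul] at this
    exact this.symm
  have hlt : ‖(e' (g t)).2‖ < c := hyU.2
  rw [hval, norm_smul, Real.norm_eq_abs, abs_of_pos ht0] at hlt
  have : c / ‖φ v‖ + 1 ≤ t := ht
  nlinarith [mul_le_mul_of_nonneg_right this (le_of_lt hw),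
    div_mul_cancel₀ c (ne_of_gt hw)]

theorem stmt_6' (V : Set Z) (K : Set (TotalSpace F E))
    (hKcpt : IsCompact K) (hKconn : ∀ e : TotalSpace F E,
      IsPreconnected (K ∩ {e' | ∃ t : ℝ, 0 < t ∧ e' = ⟨e.proj, t • e.snd⟩}))
    (hKnhds : ∀ z ∈ V, K ∈ nhds (⟨z, 0⟩ : TotalSpace F E)) :
    (∀ e : TotalSpace F E, IsPreconnected ((TotalSpace.proj ⁻¹' V \ K) ∩
        {e' | ∃ t : ℝ, 0 < t ∧ e' = ⟨e.proj, t • e.snd⟩})) ∧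
      {e' | ∃ t : ℝ, 0 < t ∧ ∃ e ∈ TotalSpace.proj ⁻¹' V \ K, e' = ⟨e.proj, t • e.snd⟩}
        = TotalSpace.proj ⁻¹' V \ {e : TotalSpace F E | e.snd = 0} := by
  have hzeroK : ∀ z ∈ V, (⟨z, 0⟩ : TotalSpace F E) ∈ K := fun z hz =>
    mem_of_mem_nhds (hKnhds z hz)
  constructor
  · intro e
    by_cases hzV : e.proj ∈ V
    · by_cases hv : e.snd = 0
      · convert isPreconnected_empty
        rw [Set.eq_empty_iff_forall_notMem]
        rintro y ⟨⟨-, hyK⟩, t, ht, rfl⟩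
        exact hyK (by rw [hv, smul_zero]; exact hzeroK e.proj hzV)
      · -- main case
        set z := e.proj
        set v := e.snd with hvdef
        set g : ℝ → TotalSpace F E := fun t => ⟨z, t • v⟩ with hgdef
        have hg : Topology.IsInducing g := ray_isInducing E z hv
        have hginj : Function.Injective g := by
          intro a b hab
          simp only [hgdef, TotalSpace.mk.injEq, heq_eq_eq, true_and] at hab
          by_contra hne
          apply hv
          have h1 : (a - b) • v = 0 := by rw [sub_smul, hab, sub_self]
          have h2 : (a - b)⁻¹ • (a - b) • v = (a - b)⁻¹ • (0 : E e.proj) := by rw [h1]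
          rwa [smul_smul, inv_mul_cancel₀ (sub_ne_zero.2 hne), one_smul, smul_zero] at h2
        set T : Set ℝ := Set.Ioi 0 ∩ g ⁻¹' K with hTdef
        have hKO : K ∩ {e' | ∃ t : ℝ, 0 < t ∧ e' = ⟨e.proj, t • e.snd⟩} = g '' T := by
          ext y
          constructor
          · rintro ⟨hyK, t, ht, rfl⟩
            exact ⟨t, ⟨ht, hyK⟩, rfl⟩
          · rintro ⟨t, ⟨ht, htK⟩, rfl⟩
            exact ⟨htK, t, ht, rfl⟩
        have hTpre : IsPreconnected T := by
          rw [← hg.isPreconnected_image, ← hKO]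
          exact hKconn e
        have hTord := hTpre.ordConnected
        -- small positive reals are in T
        have hsm : g ⁻¹' K ∈ nhds (0 : ℝ) := by
          apply hg.continuous.continuousAt.preimage_mem_nhds
          have : g 0 = ⟨z, 0⟩ := by simp [hgdef]
          rw [this]
          exact hKnhds z hzV
        obtain ⟨ε, hε, hball⟩ := Metric.mem_nhds_iff.1 hsm
        have hsmall : ∀ t : ℝ, 0 < t → t < ε → t ∈ T := by
          intro t ht htε
          exact ⟨ht, hball (by simpa [Real.dist_eq, abs_of_pos ht] using htε)⟩
        have hSO : (TotalSpace.proj ⁻¹' V \ K) ∩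
            {e' | ∃ t : ℝ, 0 < t ∧ e' = ⟨e.proj, t • e.snd⟩} = g '' (Set.Ioi 0 \ T) := by
          ext y
          constructor
          · rintro ⟨⟨-, hyK⟩, t, ht, rfl⟩
            exact ⟨t, ⟨ht, fun hT => hyK hT.2⟩, rfl⟩
          · rintro ⟨t, ⟨ht, htT⟩, rfl⟩
            exact ⟨⟨hzV, fun hK' => htT ⟨ht, hK'⟩⟩, t, ht, rfl⟩
        rw [hSO]
        apply IsPreconnected.image _ g hg.continuous.continuousOn
        apply Set.OrdConnected.isPreconnected
        constructor
        rintro a ⟨ha0, haT⟩ b ⟨hb0, hbT⟩ c ⟨hac, hcb⟩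
        have ha0' : (0 : ℝ) < a := ha0
        have hc0 : (0 : ℝ) < c := lt_of_lt_of_le ha0' hac
        refine ⟨hc0, fun hcT => ?_⟩
        set t0 := min (ε / 2) (a / 2) with ht0
        have ht0pos : 0 < t0 := lt_min (by linarith) (by linarith)
        have ht0T : t0 ∈ T := hsmall t0 ht0pos (lt_of_le_of_lt (min_le_left _ _) (by linarith))
        have ht0a : t0 ≤ a := le_trans (min_le_right _ _) (by linarith)
        exact haT (hTord.out ht0T hcT ⟨ht0a, hac⟩)
    · convert isPreconnected_empty
      rw [Set.eq_empty_iff_forall_notMem]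
      rintro y ⟨⟨hyV, -⟩, t, ht, rfl⟩
      exact hzV hyV
  · ext y
    constructor
    · rintro ⟨t, ht, e₀, ⟨he₀V, he₀K⟩, rfl⟩
      refine ⟨he₀V, fun h0 => ?_⟩
      have hsnd : e₀.snd ≠ 0 := by
        intro hs
        apply he₀K
        have : e₀ = ⟨e₀.proj, 0⟩ := by
          cases e₀ with
          | mk p s => simp_all
        rw [this]
        exact hzeroK e₀.proj he₀V
      exact smul_ne_zero (ne_of_gt ht) hsnd h0
    · rintro ⟨hyV, hy0⟩
      obtain ⟨z, v⟩ := y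
      have hv : v ≠ 0 := hy0
      obtain ⟨s, hs, hsK⟩ := exists_ray_not_mem E hKcpt z hv
      refine ⟨s⁻¹, by positivity, ⟨z, s • v⟩, ⟨hyV, hsK⟩, ?_⟩
      simp [smul_smul, inv_mul_cancel₀ (ne_of_gt hs)]


/-- The geometric claim in the proof of Lemma 1.21(ii): if `V ⊆ Z` and `K` is a compact
`ℝ₊`-connected subset of the total space which is a neighborhood of the zero vector `0_z`
for every `z ∈ V`, then `τ⁻¹(V) \ K` is `ℝ₊`-connected and
`ℝ₊(τ⁻¹(V) \ K) = τ⁻¹(V) \ Z₀`. -/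
theorem stmt_6 (V : Set Z) (K : Set (TotalSpace F E))
    (hKcpt : IsCompact K) (hKconn : rposConnected E K)
    (hKnhds : ∀ z ∈ V, K ∈ nhds (⟨z, 0⟩ : TotalSpace F E)) :
    rposConnected E (TotalSpace.proj ⁻¹' V \ K) ∧
      rposSat E (TotalSpace.proj ⁻¹' V \ K) = TotalSpace.proj ⁻¹' V \ zeroSection E := by
  exact stmt_6' E V K hKcpt hKconn hKnhds
end
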